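/- For all β₀ > 0 and γ₀ ∈ ℝ, the set { s ∈ ℝ : s I₀(s) = (γ₀ + β₀ s²) I₁(s) } is finite. (Consequently the linearised operator K has only finitely many purely imaginary eigenvalues.) -/

import Mathlib

/-!
With `y = (s/2)²`, both Bessel functions are entire and
`s I₀(s) - (γ₀ + β₀ s²) I₁(s) = (s/2) ∑ⱼ dⱼ yʲ`, where `dⱼ = (2 - γ₀/(j+1) - 4β₀ j)/(j!)²`.
Since `β₀ > 0`, all but finitely many `dⱼ` are negative, so the series is negative for
large `y`. Hence the zeros of this entire function are bounded, and an analytic function that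
is not identically zero has only finitely many zeros in a compact set.
-/

open Filter Topology Set
open scoped Nat

noncomputable section

/-- The modified Bessel function of the first kind `I_n`, as a power series. -/
def besselI (n : ℕ) (x : ℝ) : ℝ :=
  ∑' k : ℕ, (x / 2) ^ (2 * k + n) / ((k ! : ℝ) * ((k + n)! : ℝ))

open Bornology

section FiniteZeros

variable {𝕜 E : Type*} [NontriviallyNormedField 𝕜] [ProperSpace 𝕜] [PreconnectedSpace 𝕜]
  [NormedAddCommGroup E] [NormedSpace 𝕜 E]

theorem AnalyticOnNhd.finite_setOf_eq_zero {f : 𝕜 → E} (hf : AnalyticOnNhd 𝕜 f univ)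
    (hcob : ∀ᶠ x in cobounded 𝕜, f x ≠ 0) : {x | f x = 0}.Finite := by
  have hbdd : IsBounded {x | f x = 0} := isBounded_def.2 hcob
  obtain ⟨x₀, hx₀⟩ := hcob.exists
  have hcod : ∀ᶠ x in codiscreteWithin univ, f x ≠ 0 :=
    (hf.eqOn_zero_or_eventually_ne_zero_of_preconnected isPreconnected_univ).resolve_left
      fun h => hx₀ (h (mem_univ x₀))
  exact (hbdd.isCompact_closure.finite_sdiff_of_mem_codiscreteWithin
    (codiscreteWithin_mono (subset_univ _) hcod)).subset
      fun x hx => ⟨subset_closure hx, not_not.2 hx⟩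

end FiniteZeros

theorem eventually_tsum_mul_pow_neg {a : ℕ → ℝ} (hs : ∀ y, Summable fun j => a j * y ^ j)
    (ha : ∀ᶠ j in atTop, a j < 0) : ∀ᶠ y in atTop, ∑' j, a j * y ^ j < 0 := by
  obtain ⟨N, hN⟩ := eventually_atTop.1 ha
  set C := ∑ j ∈ Finset.range N, |a j|
  have haN : 0 < -a N := neg_pos.2 (hN N le_rfl)
  filter_upwards [eventually_gt_atTop (max 1 (C / -a N))] with y hy
  have hy1 : 1 < y := (le_max_left _ _).trans_lt hy
  have hyC : C < -a N * y := by
    have := (le_max_right _ _).trans_lt hy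
    rwa [div_lt_iff₀ haN, mul_comm] at this
  -- The terms past `N` are nonpositive, and `a N * y ^ (N + 1)` dominates `y` times the head.
  have hhead : y * ∑ j ∈ Finset.range N, a j * y ^ j ≤ C * y ^ N := by
    rw [Finset.mul_sum, Finset.sum_mul]
    refine Finset.sum_le_sum fun j hj => ?_
    calc y * (a j * y ^ j) = a j * y ^ (j + 1) := by ring
      _ ≤ |a j| * y ^ (j + 1) := by gcongr; exact le_abs_self _
      _ ≤ |a j| * y ^ N := by
        gcongr
        · exact hy1.le
        · exact Finset.mem_range.1 hj
  have htail : ∑' j, a (j + (N + 1)) * y ^ (j + (N + 1)) ≤ 0 :=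
    tsum_nonpos fun j => mul_nonpos_of_nonpos_of_nonneg (hN _ (by omega)).le (by positivity)
  have hfinite : y * (∑ j ∈ Finset.range N, a j * y ^ j + a N * y ^ N) < 0 := by
    have hyN : 0 < y ^ N := by positivity
    nlinarith [mul_lt_mul_of_pos_left hyC hyN]
  rw [← (hs y).sum_add_tsum_nat_add (N + 1), Finset.sum_range_succ]
  linarith [neg_of_mul_neg_right hfinite (by linarith)]

def besselCoeff (n k : ℕ) : ℝ := ((k ! : ℝ) * (k + n)!)⁻¹

lemma besselCoeff_one (k : ℕ) : besselCoeff 1 k = besselCoeff 0 k / (k + 1) := by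
  simp only [besselCoeff, Nat.factorial_succ, add_zero]
  push_cast
  field_simp

lemma succ_mul_besselCoeff_zero_succ (k : ℕ) :
    (k + 1 : ℝ) * besselCoeff 0 (k + 1) = besselCoeff 1 k := by
  simp only [besselCoeff, Nat.factorial_succ, add_zero]
  push_cast
  field_simp

lemma summable_besselCoeff_mul_pow (n : ℕ) (y : ℝ) :
    Summable fun k => besselCoeff n k * y ^ k := by
  refine Summable.of_norm_bounded (Real.summable_pow_div_factorial |y|) fun k => ?_
  have h1 : (1 : ℝ) ≤ (k + n)! := by exact_mod_cast (k + n).factorial_pos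
  simp only [norm_mul, norm_pow, Real.norm_eq_abs]
  rw [besselCoeff, abs_inv, abs_of_pos (by positivity), div_eq_inv_mul]
  gcongr
  exact le_mul_of_one_le_right (by positivity) h1

def besselIPowerSeries (n : ℕ) : FormalMultilinearSeries ℝ ℝ ℝ :=
  FormalMultilinearSeries.ofScalars ℝ (besselCoeff n)

lemma besselIPowerSeries_radius (n : ℕ) : (besselIPowerSeries n).radius = ⊤ := by
  refine FormalMultilinearSeries.radius_eq_top_of_summable_norm _ fun r => ?_
  simpa [besselIPowerSeries, FormalMultilinearSeries.ofScalars_norm, norm_mul]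
    using (summable_besselCoeff_mul_pow n r).norm

lemma hasSum_besselIPowerSeries (n : ℕ) (y : ℝ) :
    HasSum (fun k => besselCoeff n k * y ^ k) ((besselIPowerSeries n).sum y) := by
  rw [besselIPowerSeries, ← FormalMultilinearSeries.ofScalarsSum,
    FormalMultilinearSeries.ofScalars_sum_eq]
  exact (summable_besselCoeff_mul_pow n y).hasSum

lemma besselI_eq (n : ℕ) (x : ℝ) :
    besselI n x = (x / 2) ^ n * (besselIPowerSeries n).sum ((x / 2) ^ 2) := by
  rw [← (hasSum_besselIPowerSeries n _).tsum_eq, ← tsum_mul_left, besselI]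
  refine tsum_congr fun k => ?_
  rw [besselCoeff, pow_add, pow_mul]
  ring

lemma analyticAt_besselI (n : ℕ) (x : ℝ) : AnalyticAt ℝ (besselI n) x := by
  have hsum : ∀ y, AnalyticAt ℝ (besselIPowerSeries n).sum y := fun y =>
    ((besselIPowerSeries n).hasFPowerSeriesOnBall
      (by simp [besselIPowerSeries_radius])).analyticAt_of_mem (by simp [besselIPowerSeries_radius])
  rw [show besselI n = _ from funext (besselI_eq n)]
  fun_prop

def dispersionCoeff (β₀ γ₀ : ℝ) (j : ℕ) : ℝ :=
  besselCoeff 0 j * (2 - γ₀ / (j + 1) - 4 * β₀ * j)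

lemma hasSum_dispersionCoeff (β₀ γ₀ y : ℝ) :
    HasSum (fun j => dispersionCoeff β₀ γ₀ j * y ^ j)
      (2 * (besselIPowerSeries 0).sum y - (γ₀ + 4 * β₀ * y) * (besselIPowerSeries 1).sum y) := by
  have h₀ := hasSum_besselIPowerSeries 0 y
  have h₁ := hasSum_besselIPowerSeries 1 y
  have hshift : HasSum (fun j : ℕ => 4 * β₀ * j * besselCoeff 0 j * y ^ j)
      (4 * β₀ * y * (besselIPowerSeries 1).sum y) := by
    rw [← hasSum_nat_add_iff' 1, Finset.sum_range_one, Nat.cast_zero, mul_zero, zero_mul,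
      zero_mul, sub_zero]
    refine (h₁.mul_left (4 * β₀ * y)).congr_fun fun k => ?_
    rw [← succ_mul_besselCoeff_zero_succ]
    push_cast
    ring
  rw [show ∀ a b : ℝ, 2 * a - (γ₀ + 4 * β₀ * y) * b = 2 * a - (γ₀ * b + 4 * β₀ * y * b) by
    intros; ring]
  refine ((h₀.mul_left 2).sub ((h₁.mul_left γ₀).add hshift)).congr_fun fun j => ?_
  rw [dispersionCoeff, besselCoeff_one]
  ring

lemma eventually_dispersionCoeff_neg {β₀ : ℝ} (γ₀ : ℝ) (hβ₀ : 0 < β₀) :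
    ∀ᶠ j in atTop, dispersionCoeff β₀ γ₀ j < 0 := by
  filter_upwards [(tendsto_natCast_atTop_atTop (R := ℝ)).eventually_gt_atTop
    ((2 + |γ₀|) / (4 * β₀))] with j hj
  have hj₀ : (0 : ℝ) ≤ j := j.cast_nonneg
  have hγ : -|γ₀| ≤ γ₀ / (j + 1) := by
    rw [le_div_iff₀ (by positivity)]
    nlinarith [neg_abs_le γ₀, abs_nonneg γ₀]
  rw [div_lt_iff₀ (by positivity)] at hj
  exact mul_neg_of_pos_of_neg (by unfold besselCoeff; positivity) (by linarith)

lemma dispersion_eq (β₀ γ₀ s : ℝ) :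
    s * besselI 0 s - (γ₀ + β₀ * s ^ 2) * besselI 1 s
      = s / 2 * ∑' j, dispersionCoeff β₀ γ₀ j * ((s / 2) ^ 2) ^ j := by
  rw [(hasSum_dispersionCoeff β₀ γ₀ _).tsum_eq, besselI_eq 0, besselI_eq 1]
  ring

/-- For all `β₀ > 0` and `γ₀ ∈ ℝ` the set of real solutions of
`s I₀(s) = (γ₀ + β₀ s²) I₁(s)` is finite (so the linearised operator `K` has only
finitely many purely imaginary eigenvalues). -/
theorem dispersion_solutions_finite (β₀ γ₀ : ℝ) (hβ₀ : 0 < β₀) :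
    {s : ℝ | s * besselI 0 s = (γ₀ + β₀ * s ^ 2) * besselI 1 s}.Finite := by
  have hF : AnalyticOnNhd ℝ (fun s => s * besselI 0 s - (γ₀ + β₀ * s ^ 2) * besselI 1 s)
      univ := fun s _ => by
      have := analyticAt_besselI 0 s
      have := analyticAt_besselI 1 s
      fun_prop
  have hseries : ∀ᶠ y in atTop, ∑' j, dispersionCoeff β₀ γ₀ j * y ^ j < 0 :=
    eventually_tsum_mul_pow_neg (fun y => (hasSum_dispersionCoeff β₀ γ₀ y).summable)
      (eventually_dispersionCoeff_neg γ₀ hβ₀)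
  have hsq : Tendsto (fun s : ℝ => (s / 2) ^ 2) (cobounded ℝ) atTop := by
    refine (((tendsto_pow_atTop two_ne_zero).comp tendsto_norm_cobounded_atTop).atTop_div_const
      (by norm_num : (0 : ℝ) < 4)).congr fun s => ?_
    rw [Function.comp_apply, Real.norm_eq_abs, sq_abs, div_pow]
    norm_num
  have hne : ∀ᶠ s in cobounded ℝ, s * besselI 0 s - (γ₀ + β₀ * s ^ 2) * besselI 1 s ≠ 0 := by
    filter_upwards [hsq.eventually hseries, eventually_ne_cobounded 0] with s hs hs0
    rw [dispersion_eq]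
    exact mul_ne_zero (div_ne_zero hs0 two_ne_zero) hs.ne
  simpa only [sub_eq_zero] using hF.finite_setOf_eq_zero hne
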